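/- Let (H,α) be a monoidal Hom-Hopf algebra over a commutative ring k and let (M,μ) be a left-covariant (H,α)-Hom-bimodule with left coaction ρ(m)=m₍₋₁₎⊗m₍₀₎, and set P_L(m)=S(m₍₋₁₎)·m₍₀₎. Then P_L(m)=m for every m∈ᶜᵒᴴM, and P_L is the unique such map with its characteristic property: if P':M→M is k-linear with P'(M)⊆ᶜᵒᴴM, P'∘μ=μ∘P', P'(u)=u for all u∈ᶜᵒᴴM, and P'(h·m)=ε(h)μ(P'(m)) for all h∈H, m∈M, then P'=P_L. -/

import Mathlib

/-!
The projection `P_L(m) = S(m₍₋₁₎) · m₍₀₎` lands in the coinvariants because the antipode is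
anti-comultiplicative, `Δ(S h) = S(h₂) ⊗ S(h₁)`. As for ordinary Hopf algebras, this holds because
both sides are convolution inverses of `Δ` in `Hom(H, H ⊗ H)`; in the Hom setting convolution is
associative and unital only on maps intertwining the twists, which `Δ ∘ S` and `τ ∘ (S ⊗ S) ∘ Δ`
do. Every `m` decomposes as `m = m₍₋₁₎ · P_L(m₍₀₎)`, so a map `P'` with `P'(h · m) = ε(h) μ(P'(m))`
satisfies `P'(m) = μ(P'(P_L(μ⁻¹ m)))`; if `P'` fixes coinvariants, this is
`μ(P_L(μ⁻¹ m)) = P_L(m)`.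
-/

open TensorProduct

noncomputable def tmul2 {k A B C D E F : Type*} [CommRing k]
    [AddCommGroup A] [AddCommGroup B] [AddCommGroup C] [AddCommGroup D]
    [AddCommGroup E] [AddCommGroup F]
    [Module k A] [Module k B] [Module k C] [Module k D] [Module k E] [Module k F]
    (f : A →ₗ[k] C →ₗ[k] E) (g : B →ₗ[k] D →ₗ[k] F) :
    (A ⊗[k] B) →ₗ[k] (C ⊗[k] D) →ₗ[k] (E ⊗[k] F) :=
  TensorProduct.curry
    ((TensorProduct.map (TensorProduct.lift f) (TensorProduct.lift g)) ∘ₗ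
      (TensorProduct.tensorTensorTensorComm k A B C D).toLinearMap)

/-- A monoidal Hom-Hopf algebra over a commutative ring `k`. -/
structure MonHomHopf (k H : Type*) [CommRing k] [AddCommGroup H] [Module k H] where
  α : H ≃ₗ[k] H
  mul : H →ₗ[k] H →ₗ[k] H
  one : H
  comul : H →ₗ[k] H ⊗[k] H
  counit : H →ₗ[k] k
  S : H →ₗ[k] H
  alpha_mul : ∀ g h, α (mul g h) = mul (α g) (α h)
  alpha_one : α one = one
  hom_assoc : ∀ g h l, mul (α g) (mul h l) = mul (mul g h) (α l)
  mul_one' : ∀ h, mul h one = α h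
  one_mul' : ∀ h, mul one h = α h
  comul_alpha : ∀ h, comul (α h)
    = TensorProduct.map α.toLinearMap α.toLinearMap (comul h)
  counit_alpha : ∀ h, counit (α h) = counit h
  hom_coassoc : ∀ h,
    (TensorProduct.assoc k H H H) ((TensorProduct.map comul α.symm.toLinearMap) (comul h))
      = (TensorProduct.map α.symm.toLinearMap comul) (comul h)
  counit_comul_left : ∀ h,
    (TensorProduct.lid k H) ((TensorProduct.map counit LinearMap.id) (comul h)) = α.symm h
  counit_comul_right : ∀ h,
    (TensorProduct.rid k H) ((TensorProduct.map LinearMap.id counit) (comul h)) = α.symm h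
  comul_mul : ∀ g h, comul (mul g h) = tmul2 mul mul (comul g) (comul h)
  comul_one : comul one = one ⊗ₜ[k] one
  counit_mul : ∀ g h, counit (mul g h) = counit g * counit h
  counit_one : counit one = 1
  antipode_left : ∀ h,
    (TensorProduct.lift mul) ((TensorProduct.map S LinearMap.id) (comul h)) = counit h • one
  antipode_right : ∀ h,
    (TensorProduct.lift mul) ((TensorProduct.map LinearMap.id S) (comul h)) = counit h • one
  S_alpha : ∀ h, S (α h) = α (S h)

/-- A left-covariant `(H,α)`-Hom-bimodule. -/
structure LeftCovBimod {k H : Type*} [CommRing k] [AddCommGroup H] [Module k H]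
    (A : MonHomHopf k H) (M : Type*) [AddCommGroup M] [Module k M] where
  μ : M ≃ₗ[k] M
  lact : H →ₗ[k] M →ₗ[k] M
  ract : M →ₗ[k] H →ₗ[k] M
  lact_assoc : ∀ g h m, lact (A.α g) (lact h m) = lact (A.mul g h) (μ m)
  lact_one : ∀ m, lact A.one m = μ m
  mu_lact : ∀ h m, μ (lact h m) = lact (A.α h) (μ m)
  ract_assoc : ∀ m g h, ract (μ m) (A.mul g h) = ract (ract m g) (A.α h)
  ract_one : ∀ m, ract m A.one = μ m
  mu_ract : ∀ m h, μ (ract m h) = ract (μ m) (A.α h)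
  bimod : ∀ h m g, ract (lact h m) (A.α g) = lact (A.α h) (ract m g)
  rho : M →ₗ[k] H ⊗[k] M
  rho_coassoc : ∀ m,
    (TensorProduct.map (LinearMap.id : H →ₗ[k] H) rho) (rho m)
      = (TensorProduct.assoc k H H M)
          ((TensorProduct.map
              ((TensorProduct.map A.α.toLinearMap (LinearMap.id : H →ₗ[k] H)) ∘ₗ A.comul)
              μ.symm.toLinearMap) (rho m))
  rho_counit : ∀ m,
    (TensorProduct.lid k M) ((TensorProduct.map A.counit (LinearMap.id : M →ₗ[k] M)) (rho m))
      = μ.symm m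
  rho_mu : ∀ m, rho (μ m) = TensorProduct.map A.α.toLinearMap μ.toLinearMap (rho m)
  rho_cov : ∀ h g m,
    rho (ract (lact h m) (A.α g))
      = tmul2 A.mul lact (A.comul (A.α h)) (tmul2 A.mul ract (rho m) (A.comul g))

/-- The projection `P_L(m) = S(m₍₋₁₎) · m₍₀₎`. -/
noncomputable def LeftCovBimod.PL {k H : Type*} [CommRing k] [AddCommGroup H] [Module k H]
    {A : MonHomHopf k H} {M : Type*} [AddCommGroup M] [Module k M]
    (B : LeftCovBimod A M) : M →ₗ[k] M :=
  (TensorProduct.lift (B.lact ∘ₗ A.S)) ∘ₗ B.rho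

@[simp]
theorem tmul2_tmul {k A B C D E F : Type*} [CommRing k]
    [AddCommGroup A] [AddCommGroup B] [AddCommGroup C] [AddCommGroup D]
    [AddCommGroup E] [AddCommGroup F]
    [Module k A] [Module k B] [Module k C] [Module k D] [Module k E] [Module k F]
    (f : A →ₗ[k] C →ₗ[k] E) (g : B →ₗ[k] D →ₗ[k] F) (a : A) (b : B) (c : C) (d : D) :
    tmul2 f g (a ⊗ₜ[k] b) (c ⊗ₜ[k] d) = f a c ⊗ₜ[k] g b d := by
  simp [tmul2]

structure HomAssocAlgebra (k R : Type*) [CommRing k] [AddCommGroup R] [Module k R] where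
  twist : R →ₗ[k] R
  mul : R →ₗ[k] R →ₗ[k] R
  one : R
  hom_assoc : ∀ x y z, mul (twist x) (mul y z) = mul (mul x y) (twist z)
  mul_one : ∀ x, mul x one = twist x
  one_mul : ∀ x, mul one x = twist x

namespace MonHomHopf

variable {k H X : Type*} [CommRing k] [AddCommGroup H] [Module k H] [AddCommGroup X] [Module k X]
  (A : MonHomHopf k H)

theorem S_one : A.S A.one = A.one := by
  apply A.α.injective
  simpa [A.comul_one, A.counit_one, A.mul_one', A.alpha_one] using A.antipode_left A.one

theorem alpha_symm_mul (g h : H) :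
    A.α.symm (A.mul g h) = A.mul (A.α.symm g) (A.α.symm h) :=
  A.α.symm_apply_eq.mpr (by simp [A.alpha_mul])

theorem S_alpha_symm (h : H) : A.S (A.α.symm h) = A.α.symm (A.S h) :=
  A.α.eq_symm_apply.mpr (by simp [← A.S_alpha])

theorem comul_comp_alpha :
    A.comul ∘ₗ A.α.toLinearMap = map A.α.toLinearMap A.α.toLinearMap ∘ₗ A.comul :=
  LinearMap.ext A.comul_alpha

theorem antipode_left_comp :
    lift A.mul ∘ₗ map A.S LinearMap.id ∘ₗ A.comul = A.counit.smulRight A.one := by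
  ext h
  simpa using A.antipode_left h

theorem antipode_right_comp :
    lift A.mul ∘ₗ map LinearMap.id A.S ∘ₗ A.comul = A.counit.smulRight A.one := by
  ext h
  simpa using A.antipode_right h

theorem lift_map_counit_smulRight_comul (F : H →ₗ[k] H →ₗ[k] X) (u x : H) :
    lift F (map LinearMap.id (A.counit.smulRight u) (A.comul x)) = F (A.α.symm x) u := by
  have key : lift F ∘ₗ map LinearMap.id (A.counit.smulRight u)
      = F.flip u ∘ₗ (TensorProduct.rid k H).toLinearMap ∘ₗ map LinearMap.id A.counit := by
    ext a b
    simp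
  simpa [A.counit_comul_right] using congr($key (A.comul x))

theorem lift_tmul2_comp_map_comul :
    lift (tmul2 A.mul A.mul) ∘ₗ map A.comul A.comul = A.comul ∘ₗ lift A.mul := by
  ext g h
  simp [A.comul_mul]

-- `h₁₁ ⊗ h₁₂ ⊗ h₂ = α⁻¹(h₁) ⊗ h₂₁ ⊗ α(h₂₂)`
theorem map_comul_id_comul (x : H) :
    map A.comul LinearMap.id (A.comul x)
      = (TensorProduct.assoc k H H H).symm
          (map A.α.symm.toLinearMap (map LinearMap.id A.α.toLinearMap)
            (map LinearMap.id A.comul (A.comul x))) := by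
  have nat : map LinearMap.id A.α.toLinearMap ∘ₗ (TensorProduct.assoc k H H H).symm.toLinearMap
      = (TensorProduct.assoc k H H H).symm.toLinearMap
          ∘ₗ map LinearMap.id (map LinearMap.id A.α.toLinearMap) :=
    TensorProduct.ext_threefold' fun a b c => rfl
  calc map A.comul LinearMap.id (A.comul x)
      = map LinearMap.id A.α.toLinearMap (map A.comul A.α.symm.toLinearMap (A.comul x)) := by
        simp [map_map]
    _ = map LinearMap.id A.α.toLinearMap
          ((TensorProduct.assoc k H H H).symm (map A.α.symm.toLinearMap A.comul (A.comul x))) := by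
        rw [← A.hom_coassoc, LinearEquiv.symm_apply_apply]
    _ = _ := by
        simpa [map_map] using congr($nat (map A.α.symm.toLinearMap A.comul (A.comul x)))

-- `h₁ ⊗ h₂₁ ⊗ h₂₂ = α(h₁₁) ⊗ h₁₂ ⊗ α⁻¹(h₂)`
theorem map_id_comul_comul (x : H) :
    map LinearMap.id A.comul (A.comul x)
      = TensorProduct.assoc k H H H
          (map (map A.α.toLinearMap LinearMap.id) A.α.symm.toLinearMap
            (map A.comul LinearMap.id (A.comul x))) := by
  have nat : map A.α.toLinearMap LinearMap.id ∘ₗ (TensorProduct.assoc k H H H).toLinearMap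
      = (TensorProduct.assoc k H H H).toLinearMap
          ∘ₗ map (map A.α.toLinearMap LinearMap.id) LinearMap.id :=
    TensorProduct.ext_threefold fun a b c => rfl
  calc map LinearMap.id A.comul (A.comul x)
      = map A.α.toLinearMap LinearMap.id (map A.α.symm.toLinearMap A.comul (A.comul x)) := by
        simp [map_map]
    _ = map A.α.toLinearMap LinearMap.id
          (TensorProduct.assoc k H H H (map A.comul A.α.symm.toLinearMap (A.comul x))) := by
        rw [A.hom_coassoc]
    _ = _ := by
        simpa [map_map] using congr($nat (map A.comul A.α.symm.toLinearMap (A.comul x)))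

noncomputable def tensorSquare : HomAssocAlgebra k (H ⊗[k] H) where
  twist := map A.α.toLinearMap A.α.toLinearMap
  mul := tmul2 A.mul A.mul
  one := A.one ⊗ₜ A.one
  hom_assoc x y z := by
    induction x using TensorProduct.induction_on with
    | zero => simp
    | add x x' hx hx' => simp only [map_add, LinearMap.add_apply, hx, hx']
    | tmul a b =>
      induction y using TensorProduct.induction_on with
      | zero => simp
      | add y y' hy hy' => simp only [map_add, LinearMap.add_apply, hy, hy']
      | tmul c d =>
        induction z using TensorProduct.induction_on with
        | zero => simp
        | add z z' hz hz' => simp only [map_add, hz, hz']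
        | tmul e f => simp [A.hom_assoc]
  mul_one x := by
    induction x using TensorProduct.induction_on with
    | zero => simp
    | add x x' hx hx' => simp only [map_add, LinearMap.add_apply, hx, hx']
    | tmul a b => simp [A.mul_one']
  one_mul x := by
    induction x using TensorProduct.induction_on with
    | zero => simp
    | add x x' hx hx' => simp only [map_add, hx, hx']
    | tmul a b => simp [A.one_mul']

section Convolution

variable (R : HomAssocAlgebra k X)

noncomputable def convolution (f g : H →ₗ[k] X) : H →ₗ[k] X :=
  lift R.mul ∘ₗ map f g ∘ₗ A.comul

noncomputable def convolutionUnit : H →ₗ[k] X :=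
  A.counit.smulRight R.one

variable {A R}

theorem convolutionUnit_convolution {f : H →ₗ[k] X}
    (hf : f ∘ₗ A.α.toLinearMap = R.twist ∘ₗ f) :
    A.convolution R (A.convolutionUnit R) f = f := by
  have key : lift R.mul ∘ₗ map (A.convolutionUnit R) f
      = R.twist ∘ₗ f ∘ₗ (TensorProduct.lid k H).toLinearMap ∘ₗ map A.counit LinearMap.id := by
    ext a b
    simp [convolutionUnit, R.one_mul]
  ext h
  calc A.convolution R (A.convolutionUnit R) f h = R.twist (f (A.α.symm h)) := by
        simpa [convolution, A.counit_comul_left] using congr($key (A.comul h))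
    _ = f h := by simpa using congr($hf (A.α.symm h)).symm

theorem convolution_convolutionUnit {f : H →ₗ[k] X}
    (hf : f ∘ₗ A.α.toLinearMap = R.twist ∘ₗ f) :
    A.convolution R f (A.convolutionUnit R) = f := by
  have key : lift R.mul ∘ₗ map f (A.convolutionUnit R)
      = R.twist ∘ₗ f ∘ₗ (TensorProduct.rid k H).toLinearMap ∘ₗ map LinearMap.id A.counit := by
    ext a b
    simp [convolutionUnit, R.mul_one]
  ext h
  calc A.convolution R f (A.convolutionUnit R) h = R.twist (f (A.α.symm h)) := by
        simpa [convolution, A.counit_comul_right] using congr($key (A.comul h))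
    _ = f h := by simpa using congr($hf (A.α.symm h)).symm

theorem convolution_assoc {f g K : H →ₗ[k] X}
    (hf : f ∘ₗ A.α.toLinearMap = R.twist ∘ₗ f) (hK : K ∘ₗ A.α.toLinearMap = R.twist ∘ₗ K) :
    A.convolution R (A.convolution R f g) K = A.convolution R f (A.convolution R g K) := by
  have key : lift R.mul ∘ₗ map (lift R.mul ∘ₗ map f g) (K ∘ₗ A.α.toLinearMap)
        ∘ₗ (TensorProduct.assoc k H H H).symm.toLinearMap
      = lift R.mul ∘ₗ map (f ∘ₗ A.α.toLinearMap) (lift R.mul ∘ₗ map g K) := by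
    refine TensorProduct.ext_threefold' fun a b c => ?_
    simp [hf, hK, R.hom_assoc]
  ext h
  calc A.convolution R (A.convolution R f g) K h
      = (lift R.mul ∘ₗ map (lift R.mul ∘ₗ map f g) (K ∘ₗ A.α.toLinearMap))
          (map A.comul A.α.symm.toLinearMap (A.comul h)) := by
        simp [convolution, map_map, LinearMap.comp_assoc]
    _ = (lift R.mul ∘ₗ map (f ∘ₗ A.α.toLinearMap) (lift R.mul ∘ₗ map g K))
          (map A.α.symm.toLinearMap A.comul (A.comul h)) := by
        rw [← key, ← A.hom_coassoc]; simp
    _ = A.convolution R f (A.convolution R g K) h := by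
        simp [convolution, map_map, LinearMap.comp_assoc]

theorem eq_of_convolution_inverse {F D G : H →ₗ[k] X}
    (hF : F ∘ₗ A.α.toLinearMap = R.twist ∘ₗ F) (hG : G ∘ₗ A.α.toLinearMap = R.twist ∘ₗ G)
    (hFD : A.convolution R F D = A.convolutionUnit R)
    (hDG : A.convolution R D G = A.convolutionUnit R) : F = G :=
  calc F = A.convolution R F (A.convolutionUnit R) := (convolution_convolutionUnit hF).symm
    _ = A.convolution R (A.convolution R F D) G := by rw [convolution_assoc hF hG, hDG]
    _ = G := by rw [hFD, convolutionUnit_convolution hG]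

end Convolution

theorem convolution_comul_comp_S_comul :
    A.convolution A.tensorSquare (A.comul ∘ₗ A.S) A.comul
      = A.convolutionUnit A.tensorSquare := by
  ext h
  have := congr($(A.lift_tmul2_comp_map_comul) (map A.S LinearMap.id (A.comul h)))
  simp only [map_map, LinearMap.comp_id, LinearMap.comp_apply, A.antipode_left] at this
  simpa [convolution, convolutionUnit, tensorSquare, A.comul_one] using this

-- `Σ α(x₁₁) S(c) ⊗ α(x₁₂) S(x₂) = α⁻¹(x) S(c) ⊗ 1`
theorem lift_tmul2_map_comul_S (c x : H) :
    lift (tmul2 A.mul A.mul)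
        (map (A.comul ∘ₗ A.α.toLinearMap) (TensorProduct.mk k H H (A.S c) ∘ₗ A.S) (A.comul x))
      = A.mul (A.α.symm x) (A.S c) ⊗ₜ A.one := by
  set F : H →ₗ[k] H →ₗ[k] H ⊗[k] H :=
    (TensorProduct.mk k H H).compl₁₂ (A.mul.flip (A.S c)) A.α.toLinearMap
  have key : lift (tmul2 A.mul A.mul)
        ∘ₗ map (map A.α.toLinearMap A.α.toLinearMap) (TensorProduct.mk k H H (A.S c) ∘ₗ A.S)
        ∘ₗ (TensorProduct.assoc k H H H).symm.toLinearMap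
        ∘ₗ map A.α.symm.toLinearMap (map LinearMap.id A.α.toLinearMap)
      = lift F ∘ₗ map LinearMap.id (lift A.mul ∘ₗ map LinearMap.id A.S) := by
    refine TensorProduct.ext_threefold' fun a b d => ?_
    simp [F, A.S_alpha, A.alpha_mul]
  calc _ = (lift (tmul2 A.mul A.mul)
        ∘ₗ map (map A.α.toLinearMap A.α.toLinearMap) (TensorProduct.mk k H H (A.S c) ∘ₗ A.S))
          (map A.comul LinearMap.id (A.comul x)) := by
        simp [map_map, comul_comp_alpha]
    _ = lift F (map LinearMap.id (lift A.mul ∘ₗ map LinearMap.id A.S ∘ₗ A.comul) (A.comul x)) := by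
        rw [map_comul_id_comul]
        simpa [map_map, LinearMap.comp_assoc] using
          congr($key (map LinearMap.id A.comul (A.comul x)))
    _ = _ := by
        rw [antipode_right_comp, lift_map_counit_smulRight_comul]
        simp [F, A.alpha_one]

theorem convolution_comul_comm_map_S_comul :
    A.convolution A.tensorSquare A.comul
        ((TensorProduct.comm k H H).toLinearMap ∘ₗ map A.S A.S ∘ₗ A.comul)
      = A.convolutionUnit A.tensorSquare := by
  set Θ := lift (tmul2 A.mul A.mul)
    ∘ₗ map A.comul ((TensorProduct.comm k H H).toLinearMap ∘ₗ map A.S A.S)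
    ∘ₗ (TensorProduct.assoc k H H H).toLinearMap
    ∘ₗ map (map A.α.toLinearMap LinearMap.id) A.α.symm.toLinearMap
  have slice : ∀ d, Θ ∘ₗ (TensorProduct.mk k (H ⊗[k] H) H).flip d
      = lift (tmul2 A.mul A.mul)
          ∘ₗ map (A.comul ∘ₗ A.α.toLinearMap)
            (TensorProduct.mk k H H (A.S (A.α.symm d)) ∘ₗ A.S) := by
    intro d
    ext a b
    simp [Θ]
  have key : Θ ∘ₗ map A.comul LinearMap.id
      = (TensorProduct.mk k H H).flip A.one ∘ₗ lift A.mul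
          ∘ₗ map A.α.symm.toLinearMap (A.S ∘ₗ A.α.symm.toLinearMap) := by
    ext x d
    simpa using congr($(slice d) (A.comul x)).trans (A.lift_tmul2_map_comul_S _ x)
  ext h
  calc _ = lift (tmul2 A.mul A.mul) (map A.comul
          ((TensorProduct.comm k H H).toLinearMap ∘ₗ map A.S A.S)
          (map LinearMap.id A.comul (A.comul h))) := by
        simp [convolution, tensorSquare, map_map, LinearMap.comp_assoc]
    _ = Θ (map A.comul LinearMap.id (A.comul h)) := by
        rw [map_id_comul_comul]; rfl
    _ = A.α.symm (lift A.mul (map LinearMap.id A.S (A.comul h))) ⊗ₜ A.one := by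
        have hα : lift A.mul ∘ₗ map A.α.symm.toLinearMap (A.S ∘ₗ A.α.symm.toLinearMap)
            = A.α.symm.toLinearMap ∘ₗ lift A.mul ∘ₗ map LinearMap.id A.S := by
          ext a b
          simp [A.alpha_symm_mul, A.S_alpha_symm]
        rw [← LinearMap.comp_apply Θ, key]
        simpa using congr($hα (A.comul h) ⊗ₜ[k] A.one)
    _ = _ := by
        simp [A.antipode_right, A.α.symm_apply_eq.mpr A.alpha_one.symm, convolutionUnit,
          tensorSquare, TensorProduct.smul_tmul']

theorem comul_comp_S :
    A.comul ∘ₗ A.S = (TensorProduct.comm k H H).toLinearMap ∘ₗ map A.S A.S ∘ₗ A.comul := by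
  have hSα : (TensorProduct.comm k H H).toLinearMap ∘ₗ map A.S A.S
        ∘ₗ map A.α.toLinearMap A.α.toLinearMap
      = map A.α.toLinearMap A.α.toLinearMap
        ∘ₗ (TensorProduct.comm k H H).toLinearMap ∘ₗ map A.S A.S := by
    ext a b
    simp [A.S_alpha]
  refine eq_of_convolution_inverse (R := A.tensorSquare) ?_ ?_
    A.convolution_comul_comp_S_comul A.convolution_comul_comm_map_S_comul
  · ext h
    simp [tensorSquare, A.S_alpha, A.comul_alpha]
  · ext h
    simpa [tensorSquare, A.comul_alpha] using congr($hSα (A.comul h))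

-- `Σ S(α h₁)₍₁₎ h₂ ⊗ S(α h₁)₍₂₎ = 1 ⊗ S(α⁻¹ h)`
theorem rightComm_comul_S_alpha_comul :
    map (lift A.mul) LinearMap.id ∘ₗ (TensorProduct.rightComm k H H H).toLinearMap
        ∘ₗ map (A.comul ∘ₗ A.S ∘ₗ A.α.toLinearMap) LinearMap.id ∘ₗ A.comul
      = TensorProduct.mk k H H A.one ∘ₗ A.S ∘ₗ A.α.symm.toLinearMap := by
  set F : H →ₗ[k] H →ₗ[k] H ⊗[k] H :=
    (TensorProduct.mk k H H).flip.compl₁₂ A.S A.α.toLinearMap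
  have key : map (lift A.mul) LinearMap.id ∘ₗ (TensorProduct.rightComm k H H H).toLinearMap
        ∘ₗ map ((TensorProduct.comm k H H).toLinearMap ∘ₗ map A.S A.S
          ∘ₗ map A.α.toLinearMap A.α.toLinearMap) LinearMap.id
        ∘ₗ (TensorProduct.assoc k H H H).symm.toLinearMap
        ∘ₗ map A.α.symm.toLinearMap (map LinearMap.id A.α.toLinearMap)
      = lift F ∘ₗ map LinearMap.id (lift A.mul ∘ₗ map A.S LinearMap.id) := by
    refine TensorProduct.ext_threefold' fun a b d => ?_
    simp [F, A.S_alpha, A.alpha_mul]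
  ext h
  calc _ = (map (lift A.mul) LinearMap.id ∘ₗ (TensorProduct.rightComm k H H H).toLinearMap
        ∘ₗ map ((TensorProduct.comm k H H).toLinearMap ∘ₗ map A.S A.S
          ∘ₗ map A.α.toLinearMap A.α.toLinearMap) LinearMap.id)
          (map A.comul LinearMap.id (A.comul h)) := by
        have hΔSα : A.comul ∘ₗ A.S ∘ₗ A.α.toLinearMap
            = ((TensorProduct.comm k H H).toLinearMap ∘ₗ map A.S A.S
              ∘ₗ map A.α.toLinearMap A.α.toLinearMap) ∘ₗ A.comul := by
          rw [← LinearMap.comp_assoc, comul_comp_S]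
          simp only [LinearMap.comp_assoc, comul_comp_alpha]
        rw [hΔSα, ← LinearMap.comp_id LinearMap.id, map_comp]
        rfl
    _ = lift F (map LinearMap.id (lift A.mul ∘ₗ map A.S LinearMap.id ∘ₗ A.comul) (A.comul h)) := by
        rw [map_comul_id_comul]
        simpa [map_map, LinearMap.comp_assoc] using
          congr($key (map LinearMap.id A.comul (A.comul h)))
    _ = _ := by
        rw [antipode_left_comp, lift_map_counit_smulRight_comul]
        simp [F, A.alpha_one]

end MonHomHopf

namespace LeftCovBimod

variable {k H M : Type*} [CommRing k] [AddCommGroup H] [Module k H] [AddCommGroup M] [Module k M]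
  {A : MonHomHopf k H} (B : LeftCovBimod A M)

theorem tmul2_ract_one_one (T : H ⊗[k] M) :
    tmul2 A.mul B.ract T (A.one ⊗ₜ A.one) = map A.α.toLinearMap B.μ.toLinearMap T := by
  induction T using TensorProduct.induction_on with
  | zero => simp
  | add T T' hT hT' => simp only [map_add, LinearMap.add_apply, hT, hT']
  | tmul a m => simp [A.mul_one', B.ract_one]

theorem rho_lact (h : H) (m : M) :
    B.rho (B.lact h m) = tmul2 A.mul B.lact (A.comul h) (B.rho m) := by
  simpa [A.alpha_one, B.ract_one, B.mu_lact, A.comul_one, tmul2_ract_one_one, ← B.rho_mu]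
    using B.rho_cov (A.α.symm h) A.one (B.μ.symm m)

theorem mu_symm_lact (h : H) (m : M) :
    B.μ.symm (B.lact h m) = B.lact (A.α.symm h) (B.μ.symm m) :=
  B.μ.symm_apply_eq.mpr (by simp [B.mu_lact])

theorem PL_apply (m : M) : B.PL m = lift (B.lact ∘ₗ A.S) (B.rho m) := rfl

theorem PL_mu (m : M) : B.PL (B.μ m) = B.μ (B.PL m) := by
  have key : lift (B.lact ∘ₗ A.S) ∘ₗ map A.α.toLinearMap B.μ.toLinearMap
      = B.μ.toLinearMap ∘ₗ lift (B.lact ∘ₗ A.S) := by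
    ext h n
    simp [A.S_alpha, B.mu_lact]
  simpa [PL_apply, B.rho_mu] using congr($key (B.rho m))

theorem PL_of_mem_coinvariants {m : M} (hm : B.rho m = A.one ⊗ₜ B.μ.symm m) : B.PL m = m := by
  simp [PL_apply, hm, A.S_one, B.lact_one]

theorem lift_lact_map_PL_rho (m : M) : lift B.lact (map LinearMap.id B.PL (B.rho m)) = m := by
  have key : lift B.lact ∘ₗ map LinearMap.id (lift (B.lact ∘ₗ A.S))
        ∘ₗ (TensorProduct.assoc k H H M).toLinearMap
        ∘ₗ map (map A.α.toLinearMap LinearMap.id ∘ₗ A.comul) B.μ.symm.toLinearMap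
      = B.μ.toLinearMap ∘ₗ (TensorProduct.lid k M).toLinearMap ∘ₗ map A.counit LinearMap.id := by
    ext h n
    have slice : lift B.lact ∘ₗ map LinearMap.id (lift (B.lact ∘ₗ A.S))
          ∘ₗ (TensorProduct.assoc k H H M).toLinearMap
          ∘ₗ (TensorProduct.mk k (H ⊗[k] H) M).flip (B.μ.symm n)
          ∘ₗ map A.α.toLinearMap LinearMap.id
        = B.lact.flip n ∘ₗ lift A.mul ∘ₗ map LinearMap.id A.S := by
      ext a b
      simp [B.lact_assoc]
    simpa [A.antipode_right, B.lact_one] using congr($slice (A.comul h))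
  calc lift B.lact (map LinearMap.id B.PL (B.rho m))
      = (lift B.lact ∘ₗ map LinearMap.id (lift (B.lact ∘ₗ A.S)))
          (map LinearMap.id B.rho (B.rho m)) := by
        simp [LeftCovBimod.PL, map_map]
    _ = B.μ (TensorProduct.lid k M (map A.counit LinearMap.id (B.rho m))) := by
        rw [B.rho_coassoc]
        exact congr($key (B.rho m))
    _ = m := by simp [B.rho_counit]

theorem tmul2_mul_lact_tmul (X : H ⊗[k] H) (b : H) (n : M) :
    tmul2 A.mul B.lact X (b ⊗ₜ n)
      = map LinearMap.id (lift B.lact) (TensorProduct.assoc k H H M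
          (map (lift A.mul) LinearMap.id (TensorProduct.rightComm k H H H (X ⊗ₜ b)) ⊗ₜ n)) := by
  induction X using TensorProduct.induction_on with
  | zero => simp
  | add X X' hX hX' => simp only [map_add, LinearMap.add_apply, TensorProduct.add_tmul, hX, hX']
  | tmul x y => simp

-- `ρ(P_L m) = Σ S(α m₍₋₁₎₁)₍₁₎ m₍₋₁₎₂ ⊗ S(α m₍₋₁₎₁)₍₂₎ · μ⁻¹(m₍₀₎)`
theorem rho_PL_eq (m : M) :
    B.rho (B.PL m)
      = map LinearMap.id (lift B.lact) (TensorProduct.assoc k H H M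
          (map (map (lift A.mul) LinearMap.id ∘ₗ (TensorProduct.rightComm k H H H).toLinearMap
            ∘ₗ map (A.comul ∘ₗ A.S ∘ₗ A.α.toLinearMap) LinearMap.id ∘ₗ A.comul)
            B.μ.symm.toLinearMap (B.rho m))) := by
  have hρ : B.rho ∘ₗ lift (B.lact ∘ₗ A.S)
      = lift (tmul2 A.mul B.lact) ∘ₗ map (A.comul ∘ₗ A.S) B.rho := by
    ext h n
    simp [B.rho_lact]
  have key : lift (tmul2 A.mul B.lact) ∘ₗ map (A.comul ∘ₗ A.S) LinearMap.id
        ∘ₗ (TensorProduct.assoc k H H M).toLinearMap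
        ∘ₗ map (map A.α.toLinearMap LinearMap.id ∘ₗ A.comul) B.μ.symm.toLinearMap
      = map LinearMap.id (lift B.lact) ∘ₗ (TensorProduct.assoc k H H M).toLinearMap
        ∘ₗ map (map (lift A.mul) LinearMap.id ∘ₗ (TensorProduct.rightComm k H H H).toLinearMap
          ∘ₗ map (A.comul ∘ₗ A.S ∘ₗ A.α.toLinearMap) LinearMap.id ∘ₗ A.comul)
          B.μ.symm.toLinearMap := by
    ext h n
    have slice : lift (tmul2 A.mul B.lact) ∘ₗ map (A.comul ∘ₗ A.S) LinearMap.id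
          ∘ₗ (TensorProduct.assoc k H H M).toLinearMap
          ∘ₗ (TensorProduct.mk k (H ⊗[k] H) M).flip (B.μ.symm n)
          ∘ₗ map A.α.toLinearMap LinearMap.id
        = map LinearMap.id (lift B.lact) ∘ₗ (TensorProduct.assoc k H H M).toLinearMap
          ∘ₗ (TensorProduct.mk k (H ⊗[k] H) M).flip (B.μ.symm n)
          ∘ₗ map (lift A.mul) LinearMap.id ∘ₗ (TensorProduct.rightComm k H H H).toLinearMap
          ∘ₗ map (A.comul ∘ₗ A.S ∘ₗ A.α.toLinearMap) LinearMap.id := by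
      ext a b
      exact B.tmul2_mul_lact_tmul _ _ _
    simpa [map_map] using congr($slice (A.comul h))
  calc B.rho (B.PL m)
      = (lift (tmul2 A.mul B.lact) ∘ₗ map (A.comul ∘ₗ A.S) LinearMap.id)
          (map LinearMap.id B.rho (B.rho m)) := by
        simpa [PL_apply, map_map] using congr($hρ (B.rho m))
    _ = _ := by
        rw [B.rho_coassoc]
        exact congr($key (B.rho m))

theorem rho_PL (m : M) : B.rho (B.PL m) = A.one ⊗ₜ B.μ.symm (B.PL m) := by
  have key : map LinearMap.id (lift B.lact) ∘ₗ (TensorProduct.assoc k H H M).toLinearMap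
        ∘ₗ map (TensorProduct.mk k H H A.one ∘ₗ A.S ∘ₗ A.α.symm.toLinearMap) B.μ.symm.toLinearMap
      = TensorProduct.mk k H M A.one ∘ₗ B.μ.symm.toLinearMap ∘ₗ lift (B.lact ∘ₗ A.S) := by
    ext h n
    simp [B.mu_symm_lact, A.S_alpha_symm]
  rw [rho_PL_eq, A.rightComm_comul_S_alpha_comul]
  exact congr($key (B.rho m))

theorem eq_mu_apply_PL_mu_symm_of_lact {P : M →ₗ[k] M}
    (hP : ∀ h m, P (B.lact h m) = A.counit h • B.μ (P m)) (m : M) :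
    P m = B.μ (P (B.PL (B.μ.symm m))) := by
  have key : P ∘ₗ lift B.lact ∘ₗ map LinearMap.id B.PL
      = B.μ.toLinearMap ∘ₗ P ∘ₗ B.PL ∘ₗ (TensorProduct.lid k M).toLinearMap
        ∘ₗ map A.counit LinearMap.id := by
    ext h n
    simp [hP]
  calc P m = P (lift B.lact (map LinearMap.id B.PL (B.rho m))) := by
        rw [B.lift_lact_map_PL_rho]
    _ = _ := by simpa [B.rho_counit] using congr($key (B.rho m))

end LeftCovBimod

/-- `P_L` is the identity on coinvariants and is the unique such projection. -/
theorem PL_unique {k H : Type*} [CommRing k] [AddCommGroup H] [Module k H]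
    (A : MonHomHopf k H) {M : Type*} [AddCommGroup M] [Module k M]
    (B : LeftCovBimod A M) :
    (∀ m : M, B.rho m = A.one ⊗ₜ[k] (B.μ.symm m) → B.PL m = m) ∧
    (∀ P' : M →ₗ[k] M,
      (∀ m, B.rho (P' m) = A.one ⊗ₜ[k] (B.μ.symm (P' m))) →
      (∀ m, P' (B.μ m) = B.μ (P' m)) →
      (∀ m, B.rho m = A.one ⊗ₜ[k] (B.μ.symm m) → P' m = m) →
      (∀ h m, P' (B.lact h m) = A.counit h • B.μ (P' m)) →
      P' = B.PL) := by
  refine ⟨fun m hm => B.PL_of_mem_coinvariants hm, fun P' _ _ hid hact => ?_⟩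
  ext m
  calc P' m = B.μ (P' (B.PL (B.μ.symm m))) := B.eq_mu_apply_PL_mu_symm_of_lact hact m
    _ = B.μ (B.PL (B.μ.symm m)) := by rw [hid _ (B.rho_PL _)]
    _ = B.PL m := by rw [← B.PL_mu, LinearEquiv.apply_symm_apply]
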